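/- Main-effect unconfounding identity: under the treatment model, IV independence, and the orthogonality conditions Cov(ϑ_a(V), α_z(V)) = 0 and Cov(ϑ_a(V), α_u(V)) = 0, it holds that E[(B − E[B])·(A − E[A|B])·A·ϑ_a(V)] = E[(B − E[B])·(A − E[A|B])·A]·E[ϑ_a(V)]. -/

import Mathlib

/-!
Only two features of `E[A | B]` matter: it is a function of `B`, and `A² = A`. Hence the
integrand equals `F · ϑ_a(V) · A` with `F := (B − E[B])(1 − E[A | B])` measurable with respect
to `σ(B)`. Conditioning on `σ(B, V)` replaces `A` by `α_z(V)·B + α_u(V)`, and independence of `B`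
and `V` splits `E[F · k(V) · A]` into `E[F B]·E[k α_z(V)] + E[F]·E[k α_u(V)]` for any bounded `k`.
For `k = ϑ_a` the orthogonality conditions factor `E[ϑ_a(V)]` out of both terms, and what
remains is the same expression for `k = 1`.
-/

open MeasureTheory ProbabilityTheory

/-- Covariance of two real random variables: `Cov(X,Z) = E[XZ] - E[X]·E[Z]`. -/
noncomputable def covE {Ω : Type*} [MeasurableSpace Ω] (μ : Measure Ω) (X Z : Ω → ℝ) : ℝ :=
  (∫ ω, X ω * Z ω ∂μ) - (∫ ω, X ω ∂μ) * (∫ ω, Z ω ∂μ)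

namespace ProbabilityTheory

variable {Ω : Type*} {mΩ : MeasurableSpace Ω} {μ : Measure Ω}

lemma IndepFun.of_measurable_comap {β γ δ ε : Type*} [mβ : MeasurableSpace β]
    [mγ : MeasurableSpace γ] [MeasurableSpace δ] [MeasurableSpace ε] {X : Ω → β} {Y : Ω → γ}
    (hXY : IndepFun X Y μ) {f : Ω → δ} {g : Ω → ε}
    (hf : Measurable[mβ.comap X] f) (hg : Measurable[mγ.comap Y] g) : IndepFun f g μ := by
  rw [IndepFun_iff_Indep] at hXY ⊢
  exact indep_of_indep_of_le hXY hf.comap_le hg.comap_le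

end ProbabilityTheory

namespace MeasureTheory

variable {Ω : Type*} {mΩ : MeasurableSpace Ω} {μ : Measure Ω}

lemma integral_mul_condExp_of_stronglyMeasurable [IsFiniteMeasure μ] {m : MeasurableSpace Ω}
    (hm : m ≤ mΩ) {g f : Ω → ℝ} (hg : StronglyMeasurable[m] g)
    (hgf : Integrable (fun ω => g ω * f ω) μ) (hf : Integrable f μ) :
    ∫ ω, g ω * (μ[f|m]) ω ∂μ = ∫ ω, g ω * f ω ∂μ := by
  have : SigmaFinite (μ.trim hm) := (isFiniteMeasure_trim hm).toSigmaFinite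
  calc ∫ ω, g ω * (μ[f|m]) ω ∂μ = ∫ ω, (μ[fun ω => g ω * f ω|m]) ω ∂μ :=
        integral_congr_ae (condExp_mul_of_stronglyMeasurable_left hg hgf hf).symm
    _ = ∫ ω, g ω * f ω ∂μ := integral_condExp hm

end MeasureTheory

section TreatmentModel

variable {Ω 𝒱 : Type*} {mΩ : MeasurableSpace Ω} [MeasurableSpace 𝒱] {μ : Measure Ω}
  {V : Ω → 𝒱} {A B : Ω → ℝ} {αz αu : 𝒱 → ℝ} {F : Ω → ℝ} {k : 𝒱 → ℝ}

lemma integral_mul_mul_comp_of_condExp_eq [IsFiniteMeasure μ]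
    (hV : Measurable V) (hA : Measurable A) (hB : Measurable B) (hAb : ∃ C, ∀ ω, |A ω| ≤ C)
    (htreat : μ[A | MeasurableSpace.comap (fun ω => (B ω, V ω)) inferInstance]
        =ᵐ[μ] fun ω => αz (V ω) * B ω + αu (V ω))
    (hFm : Measurable[MeasurableSpace.comap B inferInstance] F) (hFi : Integrable F μ)
    (hkm : Measurable k) (hkb : ∃ C, ∀ x, |k x| ≤ C) :
    ∫ ω, F ω * A ω * k (V ω) ∂μ
      = ∫ ω, F ω * B ω * (k (V ω) * αz (V ω)) + F ω * (k (V ω) * αu (V ω)) ∂μ := by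
  obtain ⟨CA, hCA⟩ := hAb
  obtain ⟨Ck, hCk⟩ := hkb
  have hBV : MeasurableSpace.comap (fun ω => (B ω, V ω)) inferInstance
      = .comap B inferInstance ⊔ .comap V inferInstance := MeasurableSpace.comap_prodMk B V
  rw [hBV] at htreat
  have hG : StronglyMeasurable[.comap B inferInstance ⊔ .comap V inferInstance]
      fun ω => F ω * k (V ω) :=
    ((hFm.mono le_sup_left le_rfl).mul
      (hkm.comp ((comap_measurable V).mono le_sup_right le_rfl))).stronglyMeasurable
  have hGA : Integrable (fun ω => F ω * k (V ω) * A ω) μ :=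
    (hFi.mul_bdd (hkm.comp hV).aestronglyMeasurable (ae_of_all _ fun ω => hCk (V ω))).mul_bdd
      hA.aestronglyMeasurable (ae_of_all _ hCA)
  have hAi : Integrable A μ := .of_bound hA.aestronglyMeasurable CA (ae_of_all _ hCA)
  calc ∫ ω, F ω * A ω * k (V ω) ∂μ = ∫ ω, F ω * k (V ω) * A ω ∂μ := by
        congr 1; ext ω; ring
    _ = ∫ ω, F ω * k (V ω) * (μ[A|.comap B inferInstance ⊔ .comap V inferInstance]) ω ∂μ :=
        (integral_mul_condExp_of_stronglyMeasurable (sup_le hB.comap_le hV.comap_le) hG hGA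
          hAi).symm
    _ = _ := by
        refine integral_congr_ae (htreat.mono fun ω hω => ?_)
        simp only [hω]
        ring

lemma integral_mul_mul_comp_of_condExp_eq_affine [IsProbabilityMeasure μ]
    (hV : Measurable V) (hA : Measurable A) (hB : Measurable B)
    (hAb : ∃ C, ∀ ω, |A ω| ≤ C) (hBb : ∃ C, ∀ ω, |B ω| ≤ C)
    (hαzm : Measurable αz) (hαum : Measurable αu)
    (hαzb : ∃ C, ∀ x, |αz x| ≤ C) (hαub : ∃ C, ∀ x, |αu x| ≤ C)
    (htreat : μ[A | MeasurableSpace.comap (fun ω => (B ω, V ω)) inferInstance]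
        =ᵐ[μ] fun ω => αz (V ω) * B ω + αu (V ω))
    (hindep : IndepFun B V μ)
    (hFm : Measurable[MeasurableSpace.comap B inferInstance] F) (hFi : Integrable F μ)
    (hkm : Measurable k) (hkb : ∃ C, ∀ x, |k x| ≤ C) :
    ∫ ω, F ω * A ω * k (V ω) ∂μ
      = (∫ ω, F ω * B ω ∂μ) * (∫ ω, k (V ω) * αz (V ω) ∂μ)
        + (∫ ω, F ω ∂μ) * (∫ ω, k (V ω) * αu (V ω) ∂μ) := by
  rw [integral_mul_mul_comp_of_condExp_eq hV hA hB hAb htreat hFm hFi hkm hkb]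
  obtain ⟨CB, hCB⟩ := hBb
  obtain ⟨Cz, hCz⟩ := hαzb
  obtain ⟨Cu, hCu⟩ := hαub
  obtain ⟨Ck, hCk⟩ := hkb
  have hkV : ∀ᵐ ω ∂μ, ‖k (V ω)‖ ≤ Ck := ae_of_all _ fun ω => hCk (V ω)
  have hz : Integrable (fun ω => k (V ω) * αz (V ω)) μ :=
    (Integrable.of_bound (hαzm.comp hV).aestronglyMeasurable Cz
      (ae_of_all _ fun ω => hCz (V ω))).bdd_mul (hkm.comp hV).aestronglyMeasurable hkV
  have hu : Integrable (fun ω => k (V ω) * αu (V ω)) μ :=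
    (Integrable.of_bound (hαum.comp hV).aestronglyMeasurable Cu
      (ae_of_all _ fun ω => hCu (V ω))).bdd_mul (hkm.comp hV).aestronglyMeasurable hkV
  have hFB : Integrable (fun ω => F ω * B ω) μ :=
    hFi.mul_bdd hB.aestronglyMeasurable (ae_of_all _ hCB)
  have hindz : IndepFun (fun ω => F ω * B ω) (fun ω => k (V ω) * αz (V ω)) μ :=
    hindep.of_measurable_comap (hFm.mul (comap_measurable B))
      ((hkm.mul hαzm).comp (comap_measurable V))
  have hindu : IndepFun F (fun ω => k (V ω) * αu (V ω)) μ :=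
    hindep.of_measurable_comap hFm ((hkm.mul hαum).comp (comap_measurable V))
  have hzi : Integrable (fun ω => F ω * B ω * (k (V ω) * αz (V ω))) μ :=
    hindz.integrable_mul hFB hz
  have hui : Integrable (fun ω => F ω * (k (V ω) * αu (V ω))) μ :=
    hindu.integrable_mul hFi hu
  rw [integral_add hzi hui, hindz.integral_fun_mul_eq_mul_integral hFB.1 hz.1,
    hindu.integral_fun_mul_eq_mul_integral hFi.1 hu.1]

end TreatmentModel

/-- Main-effect unconfounding identity:
`E[(B − E[B])·(A − E[A|B])·A·ϑ_a(V)] = E[(B − E[B])·(A − E[A|B])·A]·E[ϑ_a(V)]`. -/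
theorem main_effect_unconfounding_identity
    {Ω 𝒱 : Type*} [MeasurableSpace Ω] [MeasurableSpace 𝒱]
    (μ : Measure Ω) [IsProbabilityMeasure μ]
    (V : Ω → 𝒱) (A B : Ω → ℝ)
    (hV : Measurable V) (hA : Measurable A) (hB : Measurable B)
    (hA01 : ∀ ω, A ω = 0 ∨ A ω = 1) (hB01 : ∀ ω, B ω = 0 ∨ B ω = 1)
    (αz αu : 𝒱 → ℝ) (hαzm : Measurable αz) (hαum : Measurable αu)
    (hαzb : ∃ C, ∀ x, |αz x| ≤ C) (hαub : ∃ C, ∀ x, |αu x| ≤ C)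
    (htreat : μ[A | MeasurableSpace.comap (fun ω => (B ω, V ω)) inferInstance]
        =ᵐ[μ] fun ω => αz (V ω) * B ω + αu (V ω))
    (hindep : IndepFun B V μ)
    (ϑa : 𝒱 → ℝ) (hϑam : Measurable ϑa) (hϑab : ∃ C, ∀ x, |ϑa x| ≤ C)
    (horth1 : covE μ (fun x => ϑa (V x)) (fun x => αz (V x)) = 0)
    (horth2 : covE μ (fun x => ϑa (V x)) (fun x => αu (V x)) = 0) :
    (∫ ω, (B ω - ∫ x, B x ∂μ)
        * (A ω - (μ[A | MeasurableSpace.comap B inferInstance]) ω) * A ω * ϑa (V ω) ∂μ)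
      = (∫ ω, (B ω - ∫ x, B x ∂μ)
          * (A ω - (μ[A | MeasurableSpace.comap B inferInstance]) ω) * A ω ∂μ)
        * (∫ ω, ϑa (V ω) ∂μ) := by
  have hAb : ∀ ω, |A ω| ≤ 1 := fun ω => by rcases hA01 ω with h | h <;> simp [h]
  have hBb : ∀ ω, |B ω| ≤ 1 := fun ω => by rcases hB01 ω with h | h <;> simp [h]
  set g := μ[A | MeasurableSpace.comap B inferInstance]
  set F : Ω → ℝ := fun ω => (B ω - ∫ x, B x ∂μ) * (1 - g ω) with hF
  have hFm : Measurable[MeasurableSpace.comap B inferInstance] F :=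
    ((comap_measurable B).sub_const _).mul
      (measurable_const.sub stronglyMeasurable_condExp.measurable)
  have hFi : Integrable F μ :=
    ((integrable_const 1).sub integrable_condExp).bdd_mul (c := 1 + |∫ x, B x ∂μ|)
      (hB.sub_const _).aestronglyMeasurable
      (ae_of_all _ fun ω => (abs_sub _ _).trans (by linarith [hBb ω]))
  have hkey := fun {k : 𝒱 → ℝ} (hkm : Measurable k) (hkb : ∃ C, ∀ x, |k x| ≤ C) =>
    integral_mul_mul_comp_of_condExp_eq_affine hV hA hB ⟨1, hAb⟩ ⟨1, hBb⟩ hαzm hαum hαzb hαub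
      htreat hindep hFm hFi hkm hkb
  have hidem : ∀ ω, (B ω - ∫ x, B x ∂μ) * (A ω - g ω) * A ω = F ω * A ω := fun ω => by
    have hAA : A ω * A ω = A ω := by rcases hA01 ω with h | h <;> simp [h]
    simp only [hF]
    linear_combination (B ω - ∫ x, B x ∂μ) * hAA
  have hone := hkey (k := fun _ => 1) measurable_const ⟨1, fun _ => by simp⟩
  simp only [mul_one, one_mul] at hone
  simp only [covE, sub_eq_zero] at horth1 horth2
  simp_rw [hidem]
  rw [hkey hϑam hϑab, hone, horth1, horth2]
  ring
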